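/- arXiv:2201.12995 — 4 statements merged into one kernel-verified Lean document; each statement's English description precedes it below -/
import Mathlib

section
/- Let U and V be real Hilbert spaces and let a : U × V → ℝ be a bounded bilinear form with |a(u,v)| ≤ M‖u‖_U‖v‖_V for all u, v. Suppose there is a constant β > 0 such that (i) for every u ∈ U, sup over nonzero v ∈ V of a(u,v)/‖v‖_V is at least β‖u‖_U, and (ii) for every v ∈ V, sup over nonzero u ∈ U of a(u,v)/‖u‖_U is at least β‖v‖_V. Then for every bounded linear functional l : V → ℝ there exists a unique u ∈ U such that a(u,v) = l(v) for all v ∈ V. (Babuška existence–uniqueness theorem, sufficiency direction, problem (2.6).) -/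
/-!
Via the Riesz representation theorem, `a u v = ⟪T u, v⟫` for a bounded operator `T : U → V`.
The first inf-sup condition says `β ‖u‖ ≤ ‖T u‖`, so `T` is injective with closed range; the
second says that only `0` is orthogonal to the range of `T`, so that closed range is all of `V`.
Hence `T` is bijective, and `u` solves the problem exactly when `T u` is the Riesz
representative of `l`.
-/

open scoped RealInnerProductSpace

section RieszOperator

variable {U V : Type*} [NormedAddCommGroup U] [NormedSpace ℝ U]
  [NormedAddCommGroup V] [InnerProductSpace ℝ V] [CompleteSpace V]

noncomputable def rieszOperator (B : U →L[ℝ] V →L[ℝ] ℝ) : U →L[ℝ] V :=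
  (InnerProductSpace.toDual ℝ V).symm.toContinuousLinearEquiv.toContinuousLinearMap.comp B

@[simp]
theorem inner_rieszOperator_apply (B : U →L[ℝ] V →L[ℝ] ℝ) (u : U) (v : V) :
    ⟪rieszOperator B u, v⟫ = B u v := by
  simp [rieszOperator]

end RieszOperator

theorem iSup_inner_div_norm_le {V : Type*} [NormedAddCommGroup V] [InnerProductSpace ℝ V]
    (w : V) : ⨆ v : {v : V // v ≠ 0}, ⟪w, v⟫ / ‖(v : V)‖ ≤ ‖w‖ :=
  Real.iSup_le (fun _ => div_le_of_le_mul₀ (norm_nonneg _) (norm_nonneg _)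
    (real_inner_le_norm _ _)) (norm_nonneg w)

namespace ContinuousLinearMap

theorem injective_of_le_norm_apply {R U V : Type*} [Semiring R]
    [NormedAddCommGroup U] [Module R U] [SeminormedAddCommGroup V] [Module R V]
    (T : U →L[R] V) {β : ℝ} (hβ : 0 < β) (hT : ∀ u, β * ‖u‖ ≤ ‖T u‖) :
    Function.Injective T := by
  refine (injective_iff_map_eq_zero T).2 fun u hu => norm_le_zero_iff.1 ?_
  have := hT u
  rw [hu, norm_zero] at this
  exact nonpos_of_mul_nonpos_right this hβ

theorem surjective_of_le_norm_apply {U V : Type*}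
    [NormedAddCommGroup U] [NormedSpace ℝ U] [CompleteSpace U]
    [NormedAddCommGroup V] [InnerProductSpace ℝ V] (T : U →L[ℝ] V) {β : ℝ} (hβ : 0 < β)
    (hT : ∀ u, β * ‖u‖ ≤ ‖T u‖) (horth : ∀ v, (∀ u, ⟪T u, v⟫ = 0) → v = 0) :
    Function.Surjective T := by
  have hanti : AntilipschitzWith (Real.toNNReal β⁻¹) T := by
    refine T.antilipschitz_of_bound fun u => ?_
    rw [Real.coe_toNNReal _ (inv_nonneg.2 hβ.le), inv_mul_eq_div, le_div_iff₀ hβ, mul_comm]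
    exact hT u
  have : CompleteSpace T.range :=
    completeSpace_coe_iff_isComplete.2
      (hanti.isUniformInducing T.uniformContinuous).isComplete_range
  have hrange_orth : T.rangeᗮ = ⊥ :=
    (Submodule.eq_bot_iff _).2 fun v hv => horth v fun u => hv (T u) ⟨u, rfl⟩
  exact LinearMap.range_eq_top.1 (Submodule.orthogonal_eq_bot_iff.1 hrange_orth)

end ContinuousLinearMap

theorem babuska_existence_uniqueness_general
    {U V : Type*}
    [NormedAddCommGroup U] [InnerProductSpace ℝ U] [CompleteSpace U]
    [NormedAddCommGroup V] [InnerProductSpace ℝ V] [CompleteSpace V]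
    (a : U →ₗ[ℝ] V →ₗ[ℝ] ℝ) (M : ℝ)
    (hbdd : ∀ (u : U) (v : V), |a u v| ≤ M * ‖u‖ * ‖v‖)
    (β : ℝ) (hβ : 0 < β)
    (hinfsup₁ : ∀ u : U,
      β * ‖u‖ ≤ ⨆ v : {v : V // v ≠ 0}, a u (v : V) / ‖(v : V)‖)
    (hinfsup₂ : ∀ v : V,
      β * ‖v‖ ≤ ⨆ u : {u : U // u ≠ 0}, a (u : U) v / ‖(u : U)‖)
    (l : V →L[ℝ] ℝ) :
    ∃! u : U, ∀ v : V, a u v = l v := by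
  -- `hbdd` is accepted as a norm bound because `‖x‖` unfolds to `|x|` on `ℝ`.
  set T := rieszOperator (a.mkContinuous₂ M hbdd)
  have hT : ∀ u v, ⟪T u, v⟫ = a u v := inner_rieszOperator_apply _
  have hlow : ∀ u, β * ‖u‖ ≤ ‖T u‖ := fun u =>
    (hinfsup₁ u).trans (by simpa only [hT] using iSup_inner_div_norm_le (T u))
  have horth : ∀ v, (∀ u, ⟪T u, v⟫ = 0) → v = 0 := fun v hv => by
    have := hinfsup₂ v
    simp only [← hT, hv, zero_div, Real.iSup_const_zero] at this
    exact norm_le_zero_iff.1 (nonpos_of_mul_nonpos_right this hβ)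
  have hsolves : ∀ u, (∀ v, a u v = l v) ↔ T u = (InnerProductSpace.toDual ℝ V).symm l := by
    intro u
    rw [← (InnerProductSpace.toDual ℝ V).injective.eq_iff, ContinuousLinearMap.ext_iff]
    simp only [InnerProductSpace.toDual_apply_apply, LinearIsometryEquiv.apply_symm_apply, hT]
  simpa only [hsolves] using
    (Function.Bijective.existsUnique ⟨T.injective_of_le_norm_apply hβ hlow,
      T.surjective_of_le_norm_apply hβ hlow horth⟩ _)

/-- **Babuška existence–uniqueness theorem (sufficiency direction).**
Let `U`, `V` be real Hilbert spaces and `a : U × V → ℝ` a bounded bilinear form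
with `|a u v| ≤ M * ‖u‖ * ‖v‖`.  If there is `β > 0` such that both inf-sup
conditions hold, then for every bounded linear functional `l : V → ℝ` there is
a unique `u ∈ U` with `a u v = l v` for all `v ∈ V`. -/
theorem babuska_existence_uniqueness
    {U V : Type*}
    [NormedAddCommGroup U] [InnerProductSpace ℝ U] [CompleteSpace U]
    [NormedAddCommGroup V] [InnerProductSpace ℝ V] [CompleteSpace V]
    (a : U →ₗ[ℝ] V →ₗ[ℝ] ℝ) (M : ℝ) (hM : 0 < M)
    (hbdd : ∀ (u : U) (v : V), |a u v| ≤ M * ‖u‖ * ‖v‖)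
    (β : ℝ) (hβ : 0 < β)
    (hinfsup₁ : ∀ u : U,
      β * ‖u‖ ≤ ⨆ v : {v : V // v ≠ 0}, a u (v : V) / ‖(v : V)‖)
    (hinfsup₂ : ∀ v : V,
      β * ‖v‖ ≤ ⨆ u : {u : U // u ≠ 0}, a (u : U) v / ‖(u : U)‖)
    (l : V →L[ℝ] ℝ) :
    ∃! u : U, ∀ v : V, a u v = l v :=
  babuska_existence_uniqueness_general a M hbdd β hβ hinfsup₁ hinfsup₂ l
end

section
/- Let U and V be real Hilbert spaces and let a : U × V → ℝ be a bounded bilinear form with |a(u,v)| ≤ M‖u‖_U‖v‖_V for all u, v. Suppose that for every bounded linear functional l : V → ℝ there exists a unique u ∈ U such that a(u,v) = l(v) for all v ∈ V. Then there exists β > 0 such that for every u ∈ U, sup over nonzero v ∈ V of a(u,v)/‖v‖_V is at least β‖u‖_U, and for every v ∈ V, sup over nonzero u ∈ U of a(u,v)/‖u‖_U is at least β‖v‖_V. (Babuška theorem, necessity direction, for problem (2.6).) -/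
/-!
Bounding `a` makes it a bounded operator `A : U →L[ℝ] V →L[ℝ] ℝ`, `A u = a(u, ·)`, and the
solvability hypothesis says exactly that `A` is bijective. By the open mapping theorem `A` is then
bounded below, `β ‖u‖ ≤ ‖A u‖`, which is the first inf-sup condition. For the second, solve
`A u = ⟪v, ·⟫`: then `β ‖u‖ ≤ ‖v‖` and `‖v‖² = a(u, v) ≤ ‖a(·, v)‖ ‖u‖`, so
`β ‖v‖ ≤ ‖a(·, v)‖`.
-/

open Function

namespace ContinuousLinearMap

theorem norm_le_iSup_div_norm {E : Type*} [NormedAddCommGroup E] [NormedSpace ℝ E]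
    (f : E →L[ℝ] ℝ) : ‖f‖ ≤ ⨆ v : {v : E // v ≠ 0}, f v / ‖(v : E)‖ := by
  set S := ⨆ v : {v : E // v ≠ 0}, f v / ‖(v : E)‖
  have hbdd : BddAbove (Set.range fun v : {v : E // v ≠ 0} => f v / ‖(v : E)‖) := by
    refine ⟨‖f‖, ?_⟩
    rintro _ ⟨⟨v, hv⟩, rfl⟩
    exact div_le_of_le_mul₀ (norm_nonneg v) (norm_nonneg f)
      ((le_abs_self _).trans (f.le_opNorm v))
  have hle : ∀ v, v ≠ 0 → f v ≤ S * ‖v‖ := fun v hv =>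
    (div_le_iff₀ (norm_pos_iff.mpr hv)).mp (le_ciSup hbdd ⟨v, hv⟩)
  have habs : ∀ v, v ≠ 0 → |f v| ≤ S * ‖v‖ := fun v hv =>
    abs_le.mpr ⟨neg_le.mp (by simpa using hle (-v) (neg_ne_zero.mpr hv)), hle v hv⟩
  have hS : 0 ≤ S := by
    rcases isEmpty_or_nonempty {v : E // v ≠ 0} with hE | ⟨v, hv⟩
    · exact (Real.iSup_of_isEmpty _).ge
    · exact nonneg_of_mul_nonneg_left ((abs_nonneg _).trans (habs v hv)) (norm_pos_iff.mpr hv)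
  refine f.opNorm_le_bound hS fun v => ?_
  rcases eq_or_ne v 0 with rfl | hv
  · simp
  · exact habs v hv

theorem exists_pos_mul_norm_le_norm_apply_of_bijective {𝕜 E F : Type*}
    [NontriviallyNormedField 𝕜]
    [NormedAddCommGroup E] [NormedSpace 𝕜 E] [CompleteSpace E]
    [NormedAddCommGroup F] [NormedSpace 𝕜 F] [CompleteSpace F]
    (A : E →L[𝕜] F) (hA : Bijective A) : ∃ β > 0, ∀ x, β * ‖x‖ ≤ ‖A x‖ := by
  let e := ContinuousLinearEquiv.ofBijective A (LinearMap.ker_eq_bot.mpr hA.1)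
    (LinearMap.range_eq_top.mpr hA.2)
  refine ⟨(‖(e.symm : F →L[𝕜] E)‖ + 1)⁻¹, by positivity, fun x => ?_⟩
  rw [inv_mul_le_iff₀ (by positivity)]
  calc ‖x‖ = ‖e.symm (A x)‖ := congrArg norm (e.symm_apply_apply x).symm
    _ ≤ ‖(e.symm : F →L[𝕜] E)‖ * ‖A x‖ := (e.symm : F →L[𝕜] E).le_opNorm _
    _ ≤ (‖(e.symm : F →L[𝕜] E)‖ + 1) * ‖A x‖ := by gcongr; linarith

theorem mul_norm_le_norm_flip_apply_of_surjective {U V : Type*}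
    [NormedAddCommGroup U] [NormedSpace ℝ U] [NormedAddCommGroup V] [InnerProductSpace ℝ V]
    (A : U →L[ℝ] V →L[ℝ] ℝ) (hA : Surjective A) {β : ℝ} (hβ : 0 ≤ β)
    (hbelow : ∀ u, β * ‖u‖ ≤ ‖A u‖) (v : V) : β * ‖v‖ ≤ ‖A.flip v‖ := by
  rcases eq_or_ne v 0 with rfl | hv
  · simp
  obtain ⟨u, hu⟩ := hA (innerSL ℝ v)
  have hu_norm : β * ‖u‖ ≤ ‖v‖ := by simpa [hu] using hbelow u
  refine le_of_mul_le_mul_right ?_ (norm_pos_iff.mpr hv)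
  calc β * ‖v‖ * ‖v‖ = β * A u v := by
        rw [hu, innerSL_apply_apply, real_inner_self_eq_norm_mul_norm, mul_assoc]
    _ ≤ β * (‖A.flip v‖ * ‖u‖) := by
      gcongr
      exact (le_abs_self _).trans ((A.flip v).le_opNorm u)
    _ ≤ ‖A.flip v‖ * ‖v‖ := by
      rw [mul_left_comm]
      exact mul_le_mul_of_nonneg_left hu_norm (norm_nonneg _)

end ContinuousLinearMap

theorem babuska_necessity_general
    {U V : Type*}
    [NormedAddCommGroup U] [InnerProductSpace ℝ U] [CompleteSpace U]
    [NormedAddCommGroup V] [InnerProductSpace ℝ V]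
    (a : U →ₗ[ℝ] V →ₗ[ℝ] ℝ) (M : ℝ)
    (hbdd : ∀ (u : U) (v : V), |a u v| ≤ M * ‖u‖ * ‖v‖)
    (hsol : ∀ l : V →L[ℝ] ℝ, ∃! u : U, ∀ v : V, a u v = l v) :
    ∃ β : ℝ, 0 < β ∧
      (∀ u : U,
        β * ‖u‖ ≤ ⨆ v : {v : V // v ≠ 0}, a u (v : V) / ‖(v : V)‖) ∧
      (∀ v : V,
        β * ‖v‖ ≤ ⨆ u : {u : U // u ≠ 0}, a (u : U) v / ‖(u : U)‖) := by
  let A : U →L[ℝ] V →L[ℝ] ℝ := a.mkContinuous₂ M fun u v => hbdd u v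
  have hA : Bijective A :=
    ⟨fun u₁ u₂ h => (hsol (A u₂)).unique (fun v => congr($h v)) fun _ => rfl,
      fun l => (hsol l).exists.imp fun _ hu => ContinuousLinearMap.ext hu⟩
  obtain ⟨β, hβ, hbelow⟩ := A.exists_pos_mul_norm_le_norm_apply_of_bijective hA
  refine ⟨β, hβ, fun u => (hbelow u).trans (A u).norm_le_iSup_div_norm, fun v => ?_⟩
  exact (A.mul_norm_le_norm_flip_apply_of_surjective hA.2 hβ.le hbelow v).trans
    (A.flip v).norm_le_iSup_div_norm

/-- **Babuška theorem (necessity direction).**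
Let `U`, `V` be real Hilbert spaces and `a` a bounded bilinear form.  If for
every bounded linear functional `l : V → ℝ` there is a unique `u ∈ U` with
`a u v = l v` for all `v`, then there exists `β > 0` such that both inf-sup
conditions hold with constant `β`. -/
theorem babuska_necessity
    {U V : Type*}
    [NormedAddCommGroup U] [InnerProductSpace ℝ U] [CompleteSpace U]
    [NormedAddCommGroup V] [InnerProductSpace ℝ V] [CompleteSpace V]
    (a : U →ₗ[ℝ] V →ₗ[ℝ] ℝ) (M : ℝ) (hM : 0 < M)
    (hbdd : ∀ (u : U) (v : V), |a u v| ≤ M * ‖u‖ * ‖v‖)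
    (hsol : ∀ l : V →L[ℝ] ℝ, ∃! u : U, ∀ v : V, a u v = l v) :
    ∃ β : ℝ, 0 < β ∧
      (∀ u : U,
        β * ‖u‖ ≤ ⨆ v : {v : V // v ≠ 0}, a u (v : V) / ‖(v : V)‖) ∧
      (∀ v : V,
        β * ‖v‖ ≤ ⨆ u : {u : U // u ≠ 0}, a (u : U) v / ‖(u : U)‖) :=
  babuska_necessity_general a M hbdd hsol
end

section
/- Let U and V be real Hilbert spaces, let a : U × V → ℝ be a bounded bilinear form with |a(u,v)| ≤ M‖u‖_U‖v‖_V (M > 0), let U_h ⊆ U and V_h ⊆ V be finite-dimensional subspaces, and let β_h > 0 be such that for every u_h ∈ U_h, sup over nonzero v_h ∈ V_h of a(u_h,v_h)/‖v_h‖_V is at least β_h‖u_h‖_U. Let l : V → ℝ be a bounded linear functional, let u ∈ U satisfy a(u,v) = l(v) for all v ∈ V, and let u_h ∈ U_h satisfy a(u_h,v_h) = l(v_h) for all v_h ∈ V_h. Then ‖u − u_h‖_U ≤ (1 + M/β_h) · inf_{w_h ∈ U_h} ‖u − w_h‖_U. (Theorem 2.1, quasi-optimality of the Petrov–Galerkin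 method.) -/
/-! Galerkin orthogonality `a (u - u_h) v_h = 0` turns the inf-sup condition, applied to
`w_h - u_h ∈ U_h`, into the stability bound `β_h ‖w_h - u_h‖ ≤ M ‖u - w_h‖`; the triangle
inequality through `w_h` then gives `‖u - u_h‖ ≤ (1 + M/β_h) ‖u - w_h‖` for every `w_h ∈ U_h`. -/

theorem galerkin_orthogonality {R U V : Type*} [CommRing R] [AddCommGroup U] [Module R U]
    [AddCommGroup V] [Module R V] (a : U →ₗ[R] V →ₗ[R] R) {Vh : Submodule R V} {l : V → R}
    {u uh : U} (hu : ∀ v, a u v = l v) (huh : ∀ vh : Vh, a uh vh = l vh) (vh : Vh) :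
    a (u - uh) vh = 0 := by
  rw [map_sub, LinearMap.sub_apply, hu, huh, sub_self]

theorem iSup_ne_zero_div_norm_le {V : Type*} [NormedAddCommGroup V] [Module ℝ V]
    {Vh : Submodule ℝ V} {f : V → ℝ} {C : ℝ} (hC : 0 ≤ C) (hf : ∀ v ∈ Vh, f v ≤ C * ‖v‖) :
    ⨆ vh : {v : Vh // v ≠ 0}, f vh / ‖((vh : Vh) : V)‖ ≤ C := by
  refine Real.iSup_le (fun ⟨v, hv⟩ ↦ ?_) hC
  have hv_pos : 0 < ‖(v : V)‖ := norm_pos_iff.mpr (Submodule.coe_eq_zero.not.mpr hv)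
  exact (div_le_iff₀ hv_pos).mpr (hf v v.2)

theorem norm_sub_le_one_add_div_mul_norm_sub {E : Type*} [SeminormedAddCommGroup E]
    {u uh w : E} {M βh : ℝ} (hβh : 0 < βh) (hstab : βh * ‖w - uh‖ ≤ M * ‖u - w‖) :
    ‖u - uh‖ ≤ (1 + M / βh) * ‖u - w‖ := by
  have hdist : ‖w - uh‖ ≤ M / βh * ‖u - w‖ := by
    rw [div_mul_eq_mul_div, le_div_iff₀ hβh, mul_comm]
    exact hstab
  calc ‖u - uh‖ ≤ ‖u - w‖ + ‖w - uh‖ := norm_sub_le_norm_sub_add_norm_sub _ _ _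
    _ ≤ ‖u - w‖ + M / βh * ‖u - w‖ := by gcongr
    _ = (1 + M / βh) * ‖u - w‖ := by ring

theorem mul_norm_sub_le_of_inf_sup {U V : Type*} [NormedAddCommGroup U] [Module ℝ U]
    [NormedAddCommGroup V] [Module ℝ V] {a : U →ₗ[ℝ] V →ₗ[ℝ] ℝ} {M βh : ℝ}
    {Uh : Submodule ℝ U} {Vh : Submodule ℝ V} {u : U} {uh : Uh} (hM : 0 ≤ M)
    (hbdd : ∀ (u : U) (v : V), |a u v| ≤ M * ‖u‖ * ‖v‖)
    (hinfsup : ∀ uh : Uh,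
      βh * ‖(uh : U)‖ ≤ ⨆ vh : {v : Vh // v ≠ 0}, a (uh : U) ((vh : Vh) : V) / ‖((vh : Vh) : V)‖)
    (horth : ∀ vh : Vh, a (u - uh) vh = 0) (wh : Uh) :
    βh * ‖(wh : U) - uh‖ ≤ M * ‖u - wh‖ := by
  refine (hinfsup (wh - uh)).trans (iSup_ne_zero_div_norm_le (by positivity) fun v hv ↦ ?_)
  calc a ((wh - uh : Uh) : U) v = a ((wh : U) - u) v + a (u - uh) v := by
        rw [← LinearMap.add_apply, ← map_add, sub_add_sub_cancel, Submodule.coe_sub]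
    _ = a ((wh : U) - u) v := by rw [horth ⟨v, hv⟩, add_zero]
    _ ≤ |a ((wh : U) - u) v| := le_abs_self _
    _ ≤ M * ‖u - wh‖ * ‖v‖ := by rw [norm_sub_rev u]; exact hbdd _ _

theorem petrov_galerkin_quasi_optimality_general
    {U V : Type*}
    [NormedAddCommGroup U] [InnerProductSpace ℝ U]
    [NormedAddCommGroup V] [InnerProductSpace ℝ V]
    (a : U →ₗ[ℝ] V →ₗ[ℝ] ℝ) (M : ℝ) (hM : 0 < M)
    (hbdd : ∀ (u : U) (v : V), |a u v| ≤ M * ‖u‖ * ‖v‖)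
    (Uh : Submodule ℝ U) (Vh : Submodule ℝ V)
    (βh : ℝ) (hβh : 0 < βh)
    (hinfsup : ∀ uh : Uh,
      βh * ‖(uh : U)‖ ≤
        ⨆ vh : {v : Vh // v ≠ 0}, a (uh : U) ((vh : Vh) : V) / ‖((vh : Vh) : V)‖)
    (l : V →L[ℝ] ℝ)
    (u : U) (hu : ∀ v : V, a u v = l v)
    (uh : Uh) (huh : ∀ vh : Vh, a (uh : U) (vh : V) = l (vh : V)) :
    ‖u - (uh : U)‖ ≤ (1 + M / βh) * ⨅ wh : Uh, ‖u - (wh : U)‖ := by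
  have hstab := mul_norm_sub_le_of_inf_sup hM.le hbdd hinfsup (galerkin_orthogonality a hu huh)
  rw [Real.mul_iInf_of_nonneg (by positivity)]
  exact le_ciInf fun wh ↦ norm_sub_le_one_add_div_mul_norm_sub hβh (hstab wh)

/-- **Quasi-optimality of the Petrov–Galerkin method (Theorem 2.1).**
Under the boundedness of `a` and the discrete inf-sup condition with constant
`β_h > 0`, if `u` solves the continuous problem and `u_h ∈ U_h` solves the
discrete problem, then `‖u − u_h‖ ≤ (1 + M/β_h) · inf_{w_h ∈ U_h} ‖u − w_h‖`. -/
theorem petrov_galerkin_quasi_optimality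
    {U V : Type*}
    [NormedAddCommGroup U] [InnerProductSpace ℝ U] [CompleteSpace U]
    [NormedAddCommGroup V] [InnerProductSpace ℝ V] [CompleteSpace V]
    (a : U →ₗ[ℝ] V →ₗ[ℝ] ℝ) (M : ℝ) (hM : 0 < M)
    (hbdd : ∀ (u : U) (v : V), |a u v| ≤ M * ‖u‖ * ‖v‖)
    (Uh : Submodule ℝ U) (Vh : Submodule ℝ V)
    [FiniteDimensional ℝ Uh] [FiniteDimensional ℝ Vh]
    (βh : ℝ) (hβh : 0 < βh)
    (hinfsup : ∀ uh : Uh,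
      βh * ‖(uh : U)‖ ≤
        ⨆ vh : {v : Vh // v ≠ 0}, a (uh : U) ((vh : Vh) : V) / ‖((vh : Vh) : V)‖)
    (l : V →L[ℝ] ℝ)
    (u : U) (hu : ∀ v : V, a u v = l v)
    (uh : Uh) (huh : ∀ vh : Vh, a (uh : U) (vh : V) = l (vh : V)) :
    ‖u - (uh : U)‖ ≤ (1 + M / βh) * ⨅ wh : Uh, ‖u - (wh : U)‖ :=
  petrov_galerkin_quasi_optimality_general a M hM hbdd Uh Vh βh hβh hinfsup l u hu uh huh
end

section
/- Let K ⊂ ℝ^d be a compact set, let f : K → ℝ be continuous, and let ε > 0. Then there exist n ∈ ℕ, coefficients a_1, …, a_n ∈ ℝ, weight vectors w_1, …, w_n ∈ ℝ^d, and biases b_1, …, b_n ∈ ℝ such that sup_{x ∈ K} |f(x) − Σ_{i=1}^n a_i · tanh(⟨w_i, x⟩ + b_i)| < ε. (Universal approximation of continuous functions on a compact domain by shallow neural networks with the non-polynomial activation function tanh, as used in the construction of the DPGM trial space.) -/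
open scoped RealInnerProductSpace

/-! Stone–Weierstrass makes the span of the exponentials `x ↦ exp ⟪w, x⟫` dense in `C(K, ℝ)`: it
is a subalgebra since `exp ⟪w, x⟫ * exp ⟪v, x⟫ = exp ⟪w + v, x⟫`, and it separates points. Each
such exponential is a uniform limit on `K` of tanh networks, since
`exp c / 2 * (1 - tanh ((c - t) / 2)) = exp t / (1 + exp (t - c))` tends to `exp t` as `c → ∞`,
uniformly for `t` bounded above, and constants are networks because `tanh 1 ≠ 0`. -/

namespace Real

theorem continuous_tanh : Continuous tanh := by
  rw [show tanh = fun x => sinh x / cosh x from funext tanh_eq_sinh_div_cosh]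
  exact continuous_sinh.div continuous_cosh fun x => (cosh_pos x).ne'

theorem tanh_pos {x : ℝ} (hx : 0 < x) : 0 < tanh x := by
  rw [tanh_eq_sinh_div_cosh]
  exact div_pos (sinh_pos_iff.mpr hx) (cosh_pos x)

theorem one_sub_tanh (x : ℝ) : 1 - tanh x = 2 / (exp (2 * x) + 1) := by
  have hexp : exp (2 * x) = exp x * exp x := by rw [← exp_add, two_mul]
  rw [tanh_eq, exp_neg, hexp]
  have := exp_pos x
  field_simp
  ring

theorem abs_exp_sub_mul_one_sub_tanh_le (c t : ℝ) :
    |exp t - exp c / 2 * (1 - tanh ((c - t) / 2))| ≤ exp (2 * t - c) := by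
  have hc : exp c = exp t * exp (c - t) := by rw [← exp_add, add_sub_cancel]
  have herr : exp t - exp c / 2 * (1 - tanh ((c - t) / 2)) = exp t / (exp (c - t) + 1) := by
    rw [one_sub_tanh, mul_div_cancel₀ _ (two_ne_zero' ℝ), hc]
    field_simp
    ring
  rw [herr, abs_of_pos (by positivity), div_le_iff₀ (by positivity), mul_add, mul_one,
    ← exp_add, show 2 * t - c + (c - t) = t by ring]
  exact le_add_of_nonneg_right (exp_pos _).le

end Real

open Real

noncomputable section

variable {E : Type*} [NormedAddCommGroup E] [InnerProductSpace ℝ E] (K : Set E)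

def tanhNeuron (w : E) (b : ℝ) : C(K, ℝ) :=
  ⟨fun x => tanh (⟪w, x⟫ + b), continuous_tanh.comp (by fun_prop)⟩

def tanhNetworks : Submodule ℝ C(K, ℝ) :=
  Submodule.span ℝ (Set.range fun p : E × ℝ => tanhNeuron K p.1 p.2)

def expInner : Multiplicative E →* C(K, ℝ) where
  toFun w := ⟨fun x => exp ⟪w.toAdd, x⟫, by fun_prop⟩
  map_one' := by ext; simp
  map_mul' w v := by ext; simp [inner_add_left, exp_add]

variable {K}

theorem tanhNeuron_mem_tanhNetworks (w : E) (b : ℝ) : tanhNeuron K w b ∈ tanhNetworks K :=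
  Submodule.subset_span ⟨(w, b), rfl⟩

theorem one_mem_tanhNetworks : (1 : C(K, ℝ)) ∈ tanhNetworks K := by
  have h : (tanh 1)⁻¹ • tanhNeuron K 0 1 = 1 := by
    ext x
    simp [tanhNeuron, (tanh_pos one_pos).ne']
  exact h ▸ (tanhNetworks K).smul_mem _ (tanhNeuron_mem_tanhNetworks 0 1)

theorem exists_eq_sum_tanh_of_mem_tanhNetworks {g : C(K, ℝ)} (hg : g ∈ tanhNetworks K) :
    ∃ (n : ℕ) (a : Fin n → ℝ) (w : Fin n → E) (b : Fin n → ℝ),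
      ∀ x : K, g x = ∑ i, a i * tanh (⟪w i, x⟫ + b i) := by
  obtain ⟨n, a, q, rfl⟩ := Submodule.mem_span_set'.mp hg
  choose p hp using fun i => (q i).2
  refine ⟨n, a, fun i => (p i).1, fun i => (p i).2, fun x => ?_⟩
  simp [← hp, tanhNeuron]

theorem expInner_mem_closure_tanhNetworks [CompactSpace K] (w : E) :
    expInner K (.ofAdd w) ∈ (tanhNetworks K).topologicalClosure := by
  rw [← SetLike.mem_coe, Submodule.topologicalClosure_coe, Metric.mem_closure_iff]
  intro δ hδ
  let ip : C(K, ℝ) := ⟨fun x => ⟪w, x⟫, by fun_prop⟩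
  have hM (x : K) : ⟪w, x⟫ ≤ ‖ip‖ := (le_abs_self _).trans (ip.norm_coe_le_norm x)
  set c := 2 * ‖ip‖ - log (δ / 2)
  refine ⟨(exp c / 2) • (1 - tanhNeuron K (-(1 / 2 : ℝ) • w) (c / 2)), ?_, ?_⟩
  · exact (tanhNetworks K).smul_mem _ <|
      (tanhNetworks K).sub_mem one_mem_tanhNetworks (tanhNeuron_mem_tanhNetworks _ _)
  refine ((ContinuousMap.dist_le (half_pos hδ).le).mpr fun x => ?_).trans_lt (half_lt_self hδ)
  have harg : ⟪-(1 / 2 : ℝ) • w, x⟫ + c / 2 = (c - ⟪w, x⟫) / 2 := by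
    rw [real_inner_smul_left]; ring
  change dist (exp ⟪w, x⟫) (exp c / 2 * (1 - tanh (⟪-(1 / 2 : ℝ) • w, x⟫ + c / 2))) ≤ δ / 2
  rw [harg]
  calc dist (exp ⟪w, x⟫) (exp c / 2 * (1 - tanh ((c - ⟪w, x⟫) / 2)))
      ≤ exp (2 * ⟪w, x⟫ - c) := abs_exp_sub_mul_one_sub_tanh_le c _
    _ ≤ exp (2 * ‖ip‖ - c) := exp_le_exp.mpr (by linarith [hM x])
    _ = δ / 2 := by rw [show 2 * ‖ip‖ - c = log (δ / 2) by ring, exp_log (half_pos hδ)]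

theorem expInner_adjoin_separatesPoints :
    (Algebra.adjoin ℝ (Set.range (expInner K))).SeparatesPoints := by
  intro x y hxy
  refine ⟨_, ⟨expInner K (.ofAdd ((x : E) - y)), Algebra.subset_adjoin ⟨_, rfl⟩, rfl⟩, ?_⟩
  intro h
  have h' : ⟪(x : E) - y, x⟫ = ⟪(x : E) - y, y⟫ := exp_injective h
  rw [← sub_eq_zero, ← inner_sub_right, inner_self_eq_zero, sub_eq_zero] at h'
  exact hxy (Subtype.ext h')

theorem toSubmodule_adjoin_range_expInner :
    Subalgebra.toSubmodule (Algebra.adjoin ℝ (Set.range (expInner K))) =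
      Submodule.span ℝ (Set.range (expInner K)) := by
  rw [Algebra.adjoin_eq_span, ← MonoidHom.coe_mrange, Submonoid.closure_eq]

theorem tanhNetworks_topologicalClosure_eq_top [CompactSpace K] :
    (tanhNetworks K).topologicalClosure = ⊤ := by
  set A := Algebra.adjoin ℝ (Set.range (expInner K))
  have hA : Subalgebra.toSubmodule A ≤ (tanhNetworks K).topologicalClosure := by
    rw [toSubmodule_adjoin_range_expInner, Submodule.span_le]
    rintro _ ⟨w, rfl⟩
    exact expInner_mem_closure_tanhNetworks w.toAdd
  refine eq_top_iff.mpr fun g _ => ?_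
  have hg : g ∈ A.topologicalClosure := by
    rw [ContinuousMap.subalgebra_topologicalClosure_eq_top_of_separatesPoints A
      expInner_adjoin_separatesPoints]
    trivial
  rw [← SetLike.mem_coe, Subalgebra.topologicalClosure_coe] at hg
  exact closure_minimal hA (Submodule.isClosed_topologicalClosure _) hg

end

/-- **Universal approximation by shallow tanh networks.**
Every continuous function on a compact set `K ⊂ ℝ^d` can be uniformly
approximated, to within any `ε > 0`, by a two-layer neural network
`x ↦ ∑ i, a i * tanh (⟪w i, x⟫ + b i)` with activation `tanh`. -/
theorem universal_approximation_tanh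
    {d : ℕ} (K : Set (EuclideanSpace ℝ (Fin d))) (hK : IsCompact K)
    (f : EuclideanSpace ℝ (Fin d) → ℝ) (hf : ContinuousOn f K)
    (ε : ℝ) (hε : 0 < ε) :
    ∃ (n : ℕ) (a : Fin n → ℝ) (w : Fin n → EuclideanSpace ℝ (Fin d))
      (b : Fin n → ℝ),
      ∀ x ∈ K, |f x - ∑ i, a i * Real.tanh (⟪w i, x⟫ + b i)| < ε := by
  have : CompactSpace K := isCompact_iff_compactSpace.mp hK
  let F : C(K, ℝ) := ⟨K.domRestrict f, hf.domRestrict⟩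
  have hF : F ∈ closure (tanhNetworks K : Set C(K, ℝ)) := by
    rw [← Submodule.topologicalClosure_coe, tanhNetworks_topologicalClosure_eq_top]
    trivial
  obtain ⟨g, hg, hFg⟩ := Metric.mem_closure_iff.mp hF ε hε
  obtain ⟨n, a, w, b, hgab⟩ := exists_eq_sum_tanh_of_mem_tanhNetworks hg
  refine ⟨n, a, w, b, fun x hx => ?_⟩
  calc |f x - ∑ i, a i * tanh (⟪w i, x⟫ + b i)| = dist (F ⟨x, hx⟩) (g ⟨x, hx⟩) := by
        rw [hgab]; rfl
    _ ≤ dist F g := ContinuousMap.dist_apply_le_dist _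
    _ < ε := hFg
end
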